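/- Let $(c_k) \in \ell^2$ with $\gamma^2 = \sum_k |c_k|^2$, let $f = \sum_k c_k r_k$ where $(r_k)$ are the Rademacher functions, and let $\mu > 0$ satisfy $4 e \mu \gamma^2 < 1$. Then $\int_0^1 \exp(\mu |f(x)|^2)\, dx \le \frac{1}{1 - 4e\mu\gamma^2}$. -/

import Mathlib

/-!
On the dyadic interval `(j / 2ⁿ, (j + 1) / 2ⁿ)` the Rademacher functions `r_k`, `k < n`, are the
signs `(-1) ^ (j / 2 ^ (n - 1 - k))` read off the binary digits of `j`, so `∫₀¹ F (∑_{k<n} c_k r_k)`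
is the average of `F` over the `2ⁿ` sign patterns. For real coefficients, pairing the patterns that
differ only in the last sign gives the moment bound `avg (∑ a_k ε_k) ^ (2m) ≤ (2m-1)‼ (∑ a_k²) ^ m`;
as `(2m-1)‼ ≤ 2 ^ m m!`, the exponential series of `exp (t (∑ a_k ε_k)²)` is dominated termwise by
the geometric series of `2ts`. A complex sum reduces to its real and imaginary parts through
`exp (μ |z|²) ≤ (exp (2μ (Re z)²) + exp (2μ (Im z)²)) / 2`, which yields `(1 - 4μγ²)⁻¹`.

To pass to `f`: since `|r_k| = 1` off a countable set, the series `∑ c_k r_k(x)` is summable there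
exactly when `∑ |c_k| < ∞`. If it is not, the `tsum` defining `f` is `0` almost everywhere and
the integral is `1`; if it is, the partial sums are bounded by `∑ |c_k|` and dominated convergence
applies.
-/

open Real MeasureTheory Finset

noncomputable def rademacher (k : ℕ) (t : ℝ) : ℝ :=
  Real.sign (Real.sin (2 * π * 2 ^ k * t))

open scoped Nat

lemma Nat.factorial_two_mul_eq (m : ℕ) : (2 * m)! = 2 ^ m * m ! * (2 * m - 1)‼ := by
  cases m with
  | zero => rfl
  | succ m =>
    rw [show 2 * (m + 1) - 1 = 2 * m + 1 by omega, show 2 * (m + 1) = 2 * m + 1 + 1 by ring,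
      Nat.factorial_eq_mul_doubleFactorial, show 2 * m + 1 + 1 = 2 * (m + 1) by ring,
      Nat.doubleFactorial_two_mul]

lemma Nat.doubleFactorial_two_mul_sub_one_le (m : ℕ) : (2 * m - 1)‼ ≤ 2 ^ m * m ! := by
  induction m with
  | zero => rfl
  | succ m ih =>
    rw [show 2 * (m + 1) - 1 = 2 * m + 1 by omega, Nat.doubleFactorial_add_one,
      Nat.factorial_succ, pow_succ]
    calc (2 * m + 1) * (2 * m - 1)‼ ≤ (2 * (m + 1)) * (2 ^ m * m !) :=
          Nat.mul_le_mul (by omega) ih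
      _ = _ := by ring

lemma Nat.choose_two_mul_mul_doubleFactorial_le {i m : ℕ} (h : i ≤ m) :
    (2 * m).choose (2 * i) * (2 * i - 1)‼ ≤ (2 * m - 1)‼ * m.choose i := by
  obtain ⟨p, rfl⟩ := Nat.exists_eq_add_of_le h
  have h1 := Nat.choose_mul_factorial_mul_factorial (show 2 * i ≤ 2 * (i + p) by omega)
  have h2 := Nat.choose_mul_factorial_mul_factorial (show i ≤ i + p by omega)
  rw [show 2 * (i + p) - 2 * i = 2 * p by omega] at h1
  rw [Nat.add_sub_cancel_left] at h2
  have hp : 2 ^ p * p ! ≤ (2 * p)! := by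
    rw [← Nat.doubleFactorial_two_mul]; exact Nat.doubleFactorial_le_factorial _
  -- after multiplying by `2 ^ i * i ! * (2 * p)!`, the claim reduces to `2 ^ p * p ! ≤ (2 * p)!`
  have hscaled : (2 * (i + p)).choose (2 * i) * (2 * i - 1)‼ * (2 ^ i * i ! * (2 * p)!)
      = 2 ^ p * p ! * ((2 * (i + p) - 1)‼ * (i + p).choose i * (2 ^ i * i !)) := by
    calc _ = (2 * (i + p)).choose (2 * i) * (2 * i)! * (2 * p)! := by
          rw [Nat.factorial_two_mul_eq i]; ring
      _ = 2 ^ (i + p) * (i + p)! * (2 * (i + p) - 1)‼ := by rw [h1, Nat.factorial_two_mul_eq]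
      _ = _ := by rw [← h2]; ring
  refine Nat.le_of_mul_le_mul_right (c := 2 ^ i * i ! * (2 * p)!) ?_ (by positivity)
  rw [hscaled]
  calc 2 ^ p * p ! * ((2 * (i + p) - 1)‼ * (i + p).choose i * (2 ^ i * i !))
      ≤ (2 * p)! * ((2 * (i + p) - 1)‼ * (i + p).choose i * (2 ^ i * i !)) :=
        Nat.mul_le_mul_right _ hp
    _ = _ := by ring

lemma add_pow_two_mul_add_sub_pow_two_mul {R : Type*} [CommRing R] (x a : R) (m : ℕ) :
    (x + a) ^ (2 * m) + (x - a) ^ (2 * m)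
      = 2 * ∑ i ∈ range (m + 1), x ^ (2 * i) * a ^ (2 * (m - i)) * (2 * m).choose (2 * i) := by
  have hterm : ∀ j ∈ range (2 * m + 1),
      x ^ j * a ^ (2 * m - j) * (2 * m).choose j + x ^ j * (-a) ^ (2 * m - j) * (2 * m).choose j
        = if Even j then 2 * (x ^ j * a ^ (2 * m - j) * (2 * m).choose j) else 0 := by
    intro j hj
    have hpar : Even (2 * m - j) ↔ Even j := by
      rw [Nat.even_sub (by have := mem_range.1 hj; omega)]; simp
    split_ifs with hev
    · rw [(hpar.2 hev).neg_pow]; ring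
    · rw [(Nat.not_even_iff_odd.1 (hpar.not.2 hev)).neg_pow]; ring
  have hevens : (range (2 * m + 1)).filter Even
      = (range (m + 1)).map ⟨(2 * ·), mul_right_injective₀ two_ne_zero⟩ := by
    ext j
    simp only [mem_filter, mem_range, mem_map, Function.Embedding.coeFn_mk, Nat.even_iff]
    constructor
    · rintro ⟨h1, h2⟩; exact ⟨j / 2, by omega, by omega⟩
    · rintro ⟨i, h1, rfl⟩; omega
  rw [sub_eq_add_neg, add_pow, add_pow, ← sum_add_distrib, sum_congr rfl hterm, ← sum_filter,
    hevens, sum_map, mul_sum]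
  refine sum_congr rfl fun i _ => ?_
  simp [Nat.mul_sub]

noncomputable def dyadicSign (n j k : ℕ) : ℝ := (-1) ^ (j / 2 ^ (n - 1 - k))

lemma dyadicSign_succ_of_lt {n k : ℕ} (hk : k < n) (j : ℕ) {b : ℕ} (hb : b < 2) :
    dyadicSign (n + 1) (2 * j + b) k = dyadicSign n j k := by
  rw [dyadicSign, dyadicSign, show n + 1 - 1 - k = n - 1 - k + 1 by omega, pow_succ',
    ← Nat.div_div_eq_div_mul, show (2 * j + b) / 2 = j by omega]

lemma dyadicSign_succ_self (n j b : ℕ) : dyadicSign (n + 1) (2 * j + b) n = (-1) ^ b := by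
  rw [dyadicSign, show n + 1 - 1 - n = 0 by omega, pow_zero, Nat.div_one, pow_add, pow_mul]
  norm_num

lemma sum_range_succ_mul_dyadicSign (a : ℕ → ℝ) (n j : ℕ) {b : ℕ} (hb : b < 2) :
    ∑ k ∈ range (n + 1), a k * dyadicSign (n + 1) (2 * j + b) k
      = ∑ k ∈ range n, a k * dyadicSign n j k + (-1) ^ b * a n := by
  rw [sum_range_succ, dyadicSign_succ_self, mul_comm (a n)]
  congr 1
  exact sum_congr rfl fun k hk => by rw [dyadicSign_succ_of_lt (mem_range.1 hk) j hb]

lemma Finset.sum_range_two_mul {M : Type*} [AddCommMonoid M] (N : ℕ) (F : ℕ → M) :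
    ∑ j ∈ range (2 * N), F j = ∑ j ∈ range N, (F (2 * j) + F (2 * j + 1)) := by
  induction N with
  | zero => simp
  | succ N ih =>
    rw [mul_add, mul_one, sum_range_succ, sum_range_succ, sum_range_succ, ih, add_assoc]

theorem sum_pow_two_mul_dyadic_le (a : ℕ → ℝ) (n m : ℕ) :
    ∑ j ∈ range (2 ^ n), (∑ k ∈ range n, a k * dyadicSign n j k) ^ (2 * m)
      ≤ 2 ^ n * ((2 * m - 1)‼ * (∑ k ∈ range n, a k ^ 2) ^ m) := by
  induction n generalizing m with
  | zero => cases m <;> simp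
  | succ n ih =>
    set u := fun j => ∑ k ∈ range n, a k * dyadicSign n j k
    set s := ∑ k ∈ range n, a k ^ 2
    have hpair : ∀ j, (∑ k ∈ range (n + 1), a k * dyadicSign (n + 1) (2 * j) k) ^ (2 * m)
        + (∑ k ∈ range (n + 1), a k * dyadicSign (n + 1) (2 * j + 1) k) ^ (2 * m)
        = 2 * ∑ i ∈ range (m + 1),
            u j ^ (2 * i) * a n ^ (2 * (m - i)) * (2 * m).choose (2 * i) := by
      intro j
      have heven := sum_range_succ_mul_dyadicSign a n j (b := 0) (by norm_num)
      rw [add_zero] at heven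
      rw [heven, sum_range_succ_mul_dyadicSign a n j (by norm_num),
        ← add_pow_two_mul_add_sub_pow_two_mul]
      simp [u, sub_eq_add_neg]
    have hcoef : ∀ i ∈ range (m + 1),
        ((2 * m).choose (2 * i) * (2 * i - 1)‼ : ℝ) ≤ (2 * m - 1)‼ * m.choose i := by
      intro i hi
      exact_mod_cast Nat.choose_two_mul_mul_doubleFactorial_le (Nat.le_of_lt_succ (mem_range.1 hi))
    calc ∑ j ∈ range (2 ^ (n + 1)),
          (∑ k ∈ range (n + 1), a k * dyadicSign (n + 1) j k) ^ (2 * m)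
        = 2 * ∑ i ∈ range (m + 1), (∑ j ∈ range (2 ^ n), u j ^ (2 * i))
            * (a n ^ (2 * (m - i)) * (2 * m).choose (2 * i)) := by
          rw [pow_succ', sum_range_two_mul, sum_congr rfl fun j _ => hpair j, ← mul_sum, sum_comm]
          simp_rw [sum_mul, mul_assoc]
      _ ≤ 2 * ∑ i ∈ range (m + 1), (2 ^ n * ((2 * i - 1)‼ * s ^ i))
            * (a n ^ (2 * (m - i)) * (2 * m).choose (2 * i)) := by
          gcongr with i
          · rw [pow_mul]; positivity
          · exact ih i
      _ = 2 * ∑ i ∈ range (m + 1), (2 ^ n * s ^ i * (a n ^ 2) ^ (m - i))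
            * ((2 * m).choose (2 * i) * (2 * i - 1)‼) := by
          congr 1
          refine sum_congr rfl fun i _ => ?_
          rw [← pow_mul]; ring
      _ ≤ 2 * ∑ i ∈ range (m + 1), (2 ^ n * s ^ i * (a n ^ 2) ^ (m - i))
            * ((2 * m - 1)‼ * m.choose i) := by
          gcongr 2 * ∑ i ∈ _, _ * ?_ with i hi
          exact hcoef i hi
      _ = 2 ^ (n + 1) * ((2 * m - 1)‼ * (s + a n ^ 2) ^ m) := by
          rw [add_pow, mul_sum, mul_sum, mul_sum]
          refine sum_congr rfl fun i _ => ?_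
          ring
      _ = 2 ^ (n + 1) * ((2 * m - 1)‼ * (∑ k ∈ range (n + 1), a k ^ 2) ^ m) := by
          rw [sum_range_succ]

theorem average_exp_mul_sq_dyadic_le (a : ℕ → ℝ) (n : ℕ) {t s : ℝ} (ht : 0 ≤ t)
    (hs : ∑ k ∈ range n, a k ^ 2 ≤ s) (hts : 2 * t * s < 1) :
    (2 ^ n : ℝ)⁻¹ * ∑ j ∈ range (2 ^ n),
        exp (t * (∑ k ∈ range n, a k * dyadicSign n j k) ^ 2) ≤ (1 - 2 * t * s)⁻¹ := by
  set x := fun j => ∑ k ∈ range n, a k * dyadicSign n j k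
  have hs0 : 0 ≤ s := (sum_nonneg fun k _ => sq_nonneg (a k)).trans hs
  have hexp :
      HasSum (fun m => (2 ^ n : ℝ)⁻¹ * ∑ j ∈ range (2 ^ n), (t * x j ^ 2) ^ m / m !)
      ((2 ^ n : ℝ)⁻¹ * ∑ j ∈ range (2 ^ n), exp (t * x j ^ 2)) := by
    refine (hasSum_sum fun j _ => ?_).mul_left _
    rw [Real.exp_eq_exp_ℝ]
    exact NormedSpace.expSeries_div_hasSum_exp _
  refine hasSum_le (fun m => ?_) hexp (hasSum_geometric_of_lt_one (by positivity) hts)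
  calc (2 ^ n : ℝ)⁻¹ * ∑ j ∈ range (2 ^ n), (t * x j ^ 2) ^ m / m !
      = t ^ m / m ! * ((2 ^ n : ℝ)⁻¹ * ∑ j ∈ range (2 ^ n), x j ^ (2 * m)) := by
        rw [mul_sum, mul_sum, mul_sum]
        refine sum_congr rfl fun j _ => ?_
        rw [pow_mul]; ring
    _ ≤ t ^ m / m ! * ((2 * m - 1)‼ * s ^ m) := by
        refine mul_le_mul_of_nonneg_left ?_ (by positivity)
        rw [inv_mul_le_iff₀ (by positivity)]
        exact (sum_pow_two_mul_dyadic_le a n m).trans (by gcongr)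
    _ ≤ t ^ m / m ! * (2 ^ m * m ! * s ^ m) := by
        gcongr
        exact_mod_cast Nat.doubleFactorial_two_mul_sub_one_le m
    _ = (2 * t * s) ^ m := by
        field_simp
        ring

theorem average_exp_mul_norm_sq_dyadic_le (c : ℕ → ℂ) (n : ℕ) {μ s : ℝ} (hμ : 0 ≤ μ)
    (hs : ∑ k ∈ range n, ‖c k‖ ^ 2 ≤ s) (hμs : 4 * μ * s < 1) :
    (2 ^ n : ℝ)⁻¹ * ∑ j ∈ range (2 ^ n),
        exp (μ * ‖∑ k ∈ range n, c k * dyadicSign n j k‖ ^ 2)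
      ≤ (1 - 4 * μ * s)⁻¹ := by
  set z := fun j => ∑ k ∈ range n, c k * (dyadicSign n j k : ℂ)
  have hpart : ∀ a : ℕ → ℝ, (∀ k, |a k| ≤ ‖c k‖) →
      (2 ^ n : ℝ)⁻¹ * ∑ j ∈ range (2 ^ n),
        exp (2 * μ * (∑ k ∈ range n, a k * dyadicSign n j k) ^ 2)
        ≤ (1 - 4 * μ * s)⁻¹ := by
    intro a ha
    have has : ∑ k ∈ range n, a k ^ 2 ≤ s :=
      (sum_le_sum fun k _ => sq_le_sq.2 (by simpa using ha k)).trans hs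
    have h := average_exp_mul_sq_dyadic_le a n (t := 2 * μ) (by positivity) has (by linarith)
    rwa [show 2 * (2 * μ) * s = 4 * μ * s by ring] at h
  have hre : ∀ j, (z j).re = ∑ k ∈ range n, (c k).re * dyadicSign n j k := by
    simp [z, Complex.re_sum]
  have him : ∀ j, (z j).im = ∑ k ∈ range n, (c k).im * dyadicSign n j k := by
    simp [z, Complex.im_sum]
  have hamgm : ∀ j, exp (μ * ‖z j‖ ^ 2)
      ≤ (exp (2 * μ * (z j).re ^ 2) + exp (2 * μ * (z j).im ^ 2)) / 2 := by
    intro j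
    have hsplit :
        exp (μ * ‖z j‖ ^ 2) = exp (μ * (z j).re ^ 2) * exp (μ * (z j).im ^ 2) := by
      rw [← exp_add, Complex.sq_norm, Complex.normSq_apply]
      ring_nf
    have hsq : ∀ y : ℝ, exp (2 * μ * y ^ 2) = exp (μ * y ^ 2) ^ 2 := fun y => by
      rw [← exp_nat_mul]
      ring_nf
    rw [hsplit, hsq, hsq]
    linarith [two_mul_le_add_sq (exp (μ * (z j).re ^ 2)) (exp (μ * (z j).im ^ 2))]
  calc (2 ^ n : ℝ)⁻¹ * ∑ j ∈ range (2 ^ n), exp (μ * ‖z j‖ ^ 2)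
      ≤ (2 ^ n : ℝ)⁻¹ * ∑ j ∈ range (2 ^ n),
          (exp (2 * μ * (z j).re ^ 2) + exp (2 * μ * (z j).im ^ 2)) / 2 := by
        gcongr with j
        exact hamgm j
    _ = ((2 ^ n : ℝ)⁻¹ * ∑ j ∈ range (2 ^ n), exp (2 * μ * (z j).re ^ 2)
          + (2 ^ n : ℝ)⁻¹ * ∑ j ∈ range (2 ^ n), exp (2 * μ * (z j).im ^ 2)) / 2 := by
        rw [← sum_div, sum_add_distrib]
        ring
    _ ≤ ((1 - 4 * μ * s)⁻¹ + (1 - 4 * μ * s)⁻¹) / 2 := by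
        simp only [hre, him]
        gcongr
        · exact hpart _ fun k => Complex.abs_re_le_norm (c k)
        · exact hpart _ fun k => Complex.abs_im_le_norm (c k)
    _ = (1 - 4 * μ * s)⁻¹ := by ring

lemma Real.sign_sin_pi_mul_of_mem_Ioo {x : ℝ} {J : ℕ} (hx : x ∈ Set.Ioo (J : ℝ) (J + 1)) :
    Real.sign (sin (π * x)) = (-1) ^ J := by
  have hpos : 0 < sin (π * (x - J)) :=
    sin_pos_of_pos_of_lt_pi (by nlinarith [hx.1, pi_pos]) (by nlinarith [hx.2, pi_pos])
  rw [show π * x = π * (x - J) + J * π by ring, sin_add_nat_mul_pi]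
  rcases neg_one_pow_eq_or ℝ J with h | h <;> rw [h]
  · rw [one_mul, Real.sign_of_pos hpos]
  · rw [neg_one_mul, Real.sign_neg, Real.sign_of_pos hpos]

lemma two_pow_mul_mem_Ioo_of_mem_Ioo {m n j : ℕ} (hmn : m ≤ n) {x : ℝ}
    (hx : x ∈ Set.Ioo ((j : ℝ) / 2 ^ n) ((j + 1) / 2 ^ n)) :
    2 ^ m * x ∈ Set.Ioo ((j / 2 ^ (n - m) : ℕ) : ℝ) ((j / 2 ^ (n - m) : ℕ) + 1) := by
  set J := j / 2 ^ (n - m)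
  have hP : (0 : ℝ) < 2 ^ (n - m) := by positivity
  have hlo : (J * 2 ^ (n - m) : ℝ) ≤ j := by exact_mod_cast Nat.div_mul_le_self j _
  have hhi : (j + 1 : ℝ) ≤ (J + 1) * 2 ^ (n - m) := by
    have : j + 1 ≤ (J + 1) * 2 ^ (n - m) := by
      rw [add_mul, one_mul]
      exact Nat.lt_div_mul_add (Nat.two_pow_pos _)
    exact_mod_cast this
  obtain ⟨h1, h2⟩ := hx
  have hsplit : (2 : ℝ) ^ n = 2 ^ m * 2 ^ (n - m) := by rw [← pow_add, Nat.add_sub_cancel' hmn]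
  rw [hsplit, div_lt_iff₀ (by positivity)] at h1
  rw [hsplit, lt_div_iff₀ (by positivity)] at h2
  constructor
  · exact lt_of_mul_lt_mul_right (hlo.trans_lt (by linarith)) hP.le
  · have h2' : 2 ^ m * x * 2 ^ (n - m) < j + 1 := by linarith
    exact lt_of_mul_lt_mul_right (h2'.trans_le hhi) hP.le

lemma rademacher_eq_dyadicSign {n j k : ℕ} (hk : k < n) {x : ℝ}
    (hx : x ∈ Set.Ioo ((j : ℝ) / 2 ^ n) ((j + 1) / 2 ^ n)) :
    rademacher k x = dyadicSign n j k := by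
  have h := two_pow_mul_mem_Ioo_of_mem_Ioo (m := k + 1) hk hx
  rw [show n - (k + 1) = n - 1 - k by omega] at h
  rw [rademacher, dyadicSign, ← Real.sign_sin_pi_mul_of_mem_Ioo h, pow_succ]
  ring_nf

lemma integral_zero_one_eq_average_of_eqOn_dyadic {E : Type*} [NormedAddCommGroup E]
    [NormedSpace ℝ E] [CompleteSpace E] {g : ℝ → E} {n : ℕ} {v : ℕ → E}
    (hg : ∀ j < 2 ^ n,
      Set.EqOn g (fun _ => v j) (Set.Ioo ((j : ℝ) / 2 ^ n) ((j + 1) / 2 ^ n))) :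
    ∫ x in (0 : ℝ)..1, g x = (2 ^ n : ℝ)⁻¹ • ∑ j ∈ range (2 ^ n), v j := by
  set a : ℕ → ℝ := fun j => j / 2 ^ n
  have hEq : ∀ j < 2 ^ n, Set.EqOn g (fun _ => v j) (Set.uIoo (a j) (a (j + 1))) := by
    intro j hj
    rw [Set.uIoo_of_le (by simp only [a]; gcongr; simp)]
    simpa [a] using hg j hj
  have hsum := intervalIntegral.sum_integral_adjacent_intervals (μ := volume) (a := a)
    fun j hj => intervalIntegrable_const.congr_uIoo (hEq j hj).symm
  rw [show a 0 = 0 by simp [a], show a (2 ^ n) = 1 by simp [a]] at hsum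
  rw [← hsum, smul_sum]
  refine sum_congr rfl fun j hj => ?_
  rw [intervalIntegral.integral_congr_uIoo (hEq j (mem_range.1 hj)),
    intervalIntegral.integral_const]
  congr 1
  simp only [a]
  push_cast
  ring

lemma integral_comp_sum_rademacher (F : ℂ → ℝ) (c : ℕ → ℂ) (n : ℕ) :
    ∫ x in (0 : ℝ)..1, F (∑ k ∈ range n, c k * rademacher k x)
      = (2 ^ n : ℝ)⁻¹ * ∑ j ∈ range (2 ^ n),
          F (∑ k ∈ range n, c k * dyadicSign n j k) := by
  refine integral_zero_one_eq_average_of_eqOn_dyadic fun j _ x hx => ?_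
  dsimp only
  congr 1
  exact sum_congr rfl fun k hk => by rw [rademacher_eq_dyadicSign (mem_range.1 hk) hx]

lemma measurable_real_sign : Measurable Real.sign :=
  Measurable.ite measurableSet_Iio measurable_const
    (Measurable.ite measurableSet_Ioi measurable_const measurable_const)

lemma measurable_rademacher (k : ℕ) : Measurable (rademacher k) :=
  measurable_real_sign.comp (continuous_sin.comp (continuous_const_mul _)).measurable

lemma abs_rademacher_le_one (k : ℕ) (x : ℝ) : |rademacher k x| ≤ 1 := by
  rcases Real.sign_apply_eq (sin (2 * π * 2 ^ k * x)) with h | h | h <;> simp [rademacher, h]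

lemma ae_abs_rademacher_eq_one : ∀ᵐ x, ∀ k, |rademacher k x| = 1 := by
  refine ae_all_iff.2 fun k => ?_
  have hzeros : {x : ℝ | sin (2 * π * 2 ^ k * x) = 0}.Countable := by
    refine (Set.countable_range fun m : ℤ => (m : ℝ) / (2 * 2 ^ k)).mono fun x hx => ?_
    obtain ⟨m, hm⟩ := sin_eq_zero_iff.1 hx
    refine ⟨m, (div_eq_iff (by positivity)).2 (mul_right_cancel₀ pi_ne_zero ?_)⟩
    rw [hm]
    ring
  filter_upwards [hzeros.ae_notMem volume] with x hx
  rcases Real.sign_apply_eq_of_ne_zero _ hx with h | h <;> simp [rademacher, h]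

lemma ae_tsum_mul_rademacher_eq_zero {c : ℕ → ℂ} (hc : ¬Summable fun k => ‖c k‖) :
    ∀ᵐ x, ∑' k, c k * rademacher k x = 0 := by
  filter_upwards [ae_abs_rademacher_eq_one] with x hx
  refine tsum_eq_zero_of_not_summable fun hs => hc ?_
  simpa [hx] using summable_norm_iff.2 hs

theorem integral_comp_tsum_rademacher_le {c : ℕ → ℂ} (hc : Summable fun k => ‖c k‖)
    {F : ℂ → ℝ} (hF : Continuous F) {B : ℝ}
    (hB : ∀ n, ∫ x in (0 : ℝ)..1, F (∑ k ∈ range n, c k * rademacher k x) ≤ B) :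
    ∫ x in (0 : ℝ)..1, F (∑' k, c k * rademacher k x) ≤ B := by
  have hterm : ∀ k x, ‖c k * (rademacher k x : ℂ)‖ ≤ ‖c k‖ := fun k x => by
    rw [norm_mul, Complex.norm_real, Real.norm_eq_abs]
    exact mul_le_of_le_one_right (norm_nonneg _) (abs_rademacher_le_one k x)
  set A := ∑' k, ‖c k‖
  have hpartial : ∀ n x, ‖∑ k ∈ range n, c k * (rademacher k x : ℂ)‖ ≤ A :=
    fun n x => (norm_sum_le _ _).trans <| (sum_le_sum fun k _ => hterm k x).trans <|
      hc.sum_le_tsum _ fun k _ => norm_nonneg _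
  obtain ⟨C, hC⟩ :=
    (isCompact_closedBall (0 : ℂ) A).exists_bound_of_continuousOn hF.continuousOn
  refine le_of_tendsto' (intervalIntegral.tendsto_integral_filter_of_dominated_convergence
    (l := Filter.atTop) (fun _ => C) (.of_forall fun n => ?_)
    (.of_forall fun n => .of_forall fun x _ => ?_) intervalIntegrable_const
    (.of_forall fun x _ => ?_)) hB
  · refine (hF.measurable.comp (Finset.measurable_sum _ fun k _ => ?_)).aestronglyMeasurable
    exact measurable_const.mul (Complex.measurable_ofReal.comp (measurable_rademacher k))
  · exact hC _ (mem_closedBall_zero_iff.2 (hpartial n x))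
  · exact (hF.tendsto _).comp
      ((hc.of_norm_bounded fun k => hterm k x).hasSum.tendsto_sum_nat)

theorem stmt_9 (c : ℕ → ℂ) (hc : Summable fun k => ‖c k‖ ^ 2)
    (f : ℝ → ℂ) (hf : ∀ x : ℝ, f x = ∑' k, c k * rademacher k x)
    (μ : ℝ) (hμ : 0 < μ)
    (hsmall : 4 * Real.exp 1 * μ * (∑' k, ‖c k‖ ^ 2) < 1) :
    ∫ x in (0 : ℝ)..1, Real.exp (μ * ‖f x‖ ^ 2)
      ≤ 1 / (1 - 4 * Real.exp 1 * μ * ∑' k, ‖c k‖ ^ 2) := by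
  set s := ∑' k, ‖c k‖ ^ 2
  have hs : 0 ≤ s := tsum_nonneg fun k => by positivity
  have hμs : 0 ≤ 4 * μ * s := by positivity
  have hμs' : 4 * μ * s ≤ 4 * exp 1 * μ * s := by
    have := one_le_exp (zero_le_one' ℝ)
    gcongr
    linarith
  have hweaken : (1 - 4 * μ * s)⁻¹ ≤ 1 / (1 - 4 * exp 1 * μ * s) := by
    rw [one_div]
    gcongr
  simp_rw [hf]
  by_cases hl1 : Summable fun k => ‖c k‖
  · refine (integral_comp_tsum_rademacher_le hl1 (F := fun z => exp (μ * ‖z‖ ^ 2))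
      (by fun_prop) fun n => ?_).trans hweaken
    rw [integral_comp_sum_rademacher (fun z => exp (μ * ‖z‖ ^ 2))]
    exact average_exp_mul_norm_sq_dyadic_le c n hμ.le
      (hc.sum_le_tsum _ fun k _ => by positivity) (by linarith)
  · have hone : ∀ᵐ x, x ∈ Set.uIoc (0 : ℝ) 1 →
        exp (μ * ‖∑' k, c k * (rademacher k x : ℂ)‖ ^ 2) = 1 := by
      filter_upwards [ae_tsum_mul_rademacher_eq_zero hl1] with x hx _
      simp [hx]
    rw [intervalIntegral.integral_congr_ae hone, intervalIntegral.integral_const, sub_zero,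
      one_smul]
    exact (one_le_inv₀ (by linarith)).2 (by linarith) |>.trans hweaken
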